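/- Let θ > 1. For λ > −1/2 and z, u ∈ E_θ define K̂_λ(z,u) = ((θ²−1)/π) ∑_{k=0}^∞ a_k^λ [4θ²(1−z²)(1−conj(u)²)]^k / (θ² − 2θ z conj(u) + 1)^{2k+1}, where a_k^λ = ( ((λ+1)/2)_k ((λ+2)/2)_k ) / ( (λ+1/2)_k k! ); this series converges absolutely for all z, u ∈ E_θ. Then for all λ, μ > −1/2, for every n ∈ ℕ, all z_1,…,z_n ∈ E_θ and all c_1,…,c_n ∈ ℂ: 0 ≤ ∑_{i,j=1}^n K̂_μ(z_i, z_j) c_i conj(c_j) ≤ (sup_{k≥0} a_k^μ/a_k^λ) · ∑_{i,j=1}^n K̂_λ(z_i, z_j) c_i conj(c_j), and the supremum sup_{k≥0} a_k^μ/a_k^λ is finite and positive. In particular each K̂_μ is a positive definite kernel on E_θ, and the kernels K̂_λ and K̂_μ are equivalent (each dominates a positive multiple of the other). -/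

import Mathlib

open Complex Real

/-- The open ellipse `E_θ = {z : |z−1| + |z+1| < θ^{1/2} + θ^{−1/2}}` with foci `±1`. -/
def ellipseE (θ : ℝ) : Set ℂ :=
  {z : ℂ | ‖z - 1‖ + ‖z + 1‖ < Real.sqrt θ + (Real.sqrt θ)⁻¹}

/-- `a_k^λ = ((λ+1)/2)_k ((λ+2)/2)_k / ((λ+1/2)_k k!)`, where `(x)_k` is the
Pochhammer symbol. -/
noncomputable def aCoef (lam : ℝ) (k : ℕ) : ℝ :=
  ((ascPochhammer ℝ k).eval ((lam + 1) / 2) * (ascPochhammer ℝ k).eval ((lam + 2) / 2)) /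
    ((ascPochhammer ℝ k).eval (lam + 1 / 2) * k.factorial)

/-- The `k`-th term of the series defining the auxiliary kernel `K̂_λ^θ`. -/
noncomputable def hatKTerm (θ lam : ℝ) (z u : ℂ) (k : ℕ) : ℂ :=
  ((aCoef lam k : ℝ) : ℂ) *
    (4 * (θ : ℂ) ^ 2 * (1 - z ^ 2) * (1 - ((starRingEnd ℂ) u) ^ 2)) ^ k /
      ((θ : ℂ) ^ 2 - 2 * (θ : ℂ) * z * (starRingEnd ℂ) u + 1) ^ (2 * k + 1)

/-- The auxiliary kernel
`K̂_λ^θ(z,u) = ((θ²−1)/π) ∑_{k≥0} a_k^λ [4θ²(1−z²)(1−conj(u)²)]^k/(θ²−2θz conj(u)+1)^{2k+1}`. -/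
noncomputable def hatK (θ lam : ℝ) (z u : ℂ) : ℂ :=
  (((θ ^ 2 - 1) / π : ℝ) : ℂ) * ∑' k : ℕ, hatKTerm θ lam z u k

/-! ### Auxiliary material -/

namespace HatKAux

open Finset

/-- Coefficient of the rank-one expansion. -/
noncomputable def betaC (θ : ℝ) (k m : ℕ) : ℝ :=
  (m + 2 * k).choose (2 * k) * (2 * θ) ^ m * (4 * θ ^ 2) ^ k / (θ ^ 2 + 1) ^ (2 * k + m + 1)

/-- The rank-one factor functions. -/
noncomputable def phiF (k m : ℕ) (z : ℂ) : ℂ := z ^ m * (1 - z ^ 2) ^ k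

lemma betaC_nonneg {θ : ℝ} (hθ : 0 < θ) (k m : ℕ) : 0 ≤ betaC θ k m := by
  unfold betaC; positivity

lemma poch_prod (x : ℝ) (k : ℕ) :
    (ascPochhammer ℝ k).eval x = ∏ i ∈ Finset.range k, (x + i) := by
  induction k with
  | zero => simp
  | succ n ih => rw [ascPochhammer_succ_eval, ih, Finset.prod_range_succ]

lemma fact_prod (k : ℕ) : (k.factorial : ℝ) = ∏ i ∈ Finset.range k, ((1 : ℝ) + i) := by
  induction k with
  | zero => simp
  | succ n ih =>
    rw [Finset.prod_range_succ, ← ih, Nat.factorial_succ]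
    push_cast; ring

lemma aCoef_eq_prod (lam : ℝ) (k : ℕ) :
    aCoef lam k = ∏ i ∈ Finset.range k,
      (((lam + 1) / 2 + i) * ((lam + 2) / 2 + i) / ((lam + 1 / 2 + i) * (1 + i))) := by
  rw [aCoef, poch_prod, poch_prod, poch_prod, fact_prod, ← Finset.prod_mul_distrib,
    ← Finset.prod_mul_distrib, ← Finset.prod_div_distrib]

lemma aCoef_pos {lam : ℝ} (hlam : -(1 / 2 : ℝ) < lam) (k : ℕ) : 0 < aCoef lam k := by
  have h1 : (0:ℝ) < (lam + 1) / 2 := by linarith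
  have h2 : (0:ℝ) < (lam + 2) / 2 := by linarith
  have h3 : (0:ℝ) < lam + 1 / 2 := by linarith
  exact div_pos (mul_pos (ascPochhammer_pos _ _ h1) (ascPochhammer_pos _ _ h2))
    (mul_pos (ascPochhammer_pos _ _ h3) (by positivity))

lemma aCoef_zero (lam : ℝ) : aCoef lam 0 = 1 := by
  simp [aCoef]

lemma sum_aux (x y : ℝ) (hx : 0 < x) (hy : 0 < y) (k : ℕ) :
    ∑ i ∈ Finset.range k, 1 / ((x + i) * (y + i)) ≤ 1 / (x * y) + 2 := by
  have key : ∀ n : ℕ, ∑ i ∈ Finset.range (n + 1), 1 / ((x + i) * (y + i)) ≤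
      1 / (x * y) + 2 - 2 / (n + 1) := by
    intro n
    induction n with
    | zero => simp
    | succ n ih =>
      rw [Finset.sum_range_succ]
      have h1 : (0:ℝ) < (n:ℝ) + 1 := by positivity
      have h2 : 1 / ((x + ((n:ℝ)+1)) * (y + ((n:ℝ)+1))) ≤ 2 / ((n:ℝ)+1) - 2 / ((n:ℝ)+2) := by
        have hle : ((n:ℝ)+1) * ((n:ℝ)+1) ≤ (x + ((n:ℝ)+1)) * (y + ((n:ℝ)+1)) := by nlinarith
        have hstep : 1 / ((x + ((n:ℝ)+1)) * (y + ((n:ℝ)+1))) ≤ 1 / (((n:ℝ)+1) * ((n:ℝ)+1)) :=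
          one_div_le_one_div_of_le (by positivity) hle
        have h3 : 1 / (((n:ℝ)+1) * ((n:ℝ)+1)) ≤ 2 / ((n:ℝ)+1) - 2 / ((n:ℝ)+2) := by
          rw [div_sub_div _ _ (ne_of_gt h1) (by positivity), div_le_div_iff₀ (by positivity) (by positivity)]
          ring_nf
          nlinarith
        linarith
      push_cast
      push_cast at ih
      rw [show (n:ℝ) + 1 + 1 = (n:ℝ) + 2 by ring]
      linarith
  cases k with
  | zero => simp; positivity
  | succ n =>
    have := key n
    have h4 : (0:ℝ) ≤ 2 / ((n:ℝ) + 1) := by positivity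
    linarith

/-- Upper bound for `aCoef`. -/
noncomputable def Mb (lam : ℝ) : ℝ :=
  Real.exp (|((lam + 1) / 2) * ((lam + 2) / 2) - (lam + 1 / 2)| * (1 / ((lam + 1 / 2) * 1) + 2))

/-- Lower bound for `aCoef`. -/
noncomputable def mb (lam : ℝ) : ℝ :=
  (Real.exp (|((lam + 1) / 2) * ((lam + 2) / 2) - (lam + 1 / 2)| *
    (1 / (((lam + 1) / 2) * ((lam + 2) / 2)) + 2)))⁻¹

lemma aCoef_le_Mb {lam : ℝ} (hlam : -(1 / 2 : ℝ) < lam) (k : ℕ) : aCoef lam k ≤ Mb lam := by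
  have hC : (0:ℝ) < lam + 1 / 2 := by linarith
  have hA : (0:ℝ) < (lam + 1) / 2 := by linarith
  have hB : (0:ℝ) < (lam + 2) / 2 := by linarith
  set Δ : ℝ := ((lam + 1) / 2) * ((lam + 2) / 2) - (lam + 1 / 2) with hΔ
  rw [aCoef_eq_prod]
  calc ∏ i ∈ Finset.range k,
        (((lam + 1) / 2 + i) * ((lam + 2) / 2 + i) / ((lam + 1 / 2 + i) * (1 + i)))
      ≤ ∏ i ∈ Finset.range k, Real.exp (|Δ| * (1 / ((lam + 1 / 2 + i) * (1 + i)))) := by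
        apply Finset.prod_le_prod
        · intro i _
          have h1 : (0:ℝ) ≤ (lam + 1) / 2 + i := by positivity
          have h2 : (0:ℝ) ≤ (lam + 2) / 2 + i := by positivity
          have h3 : (0:ℝ) ≤ (lam + 1 / 2 + i) * (1 + i) := by positivity
          exact div_nonneg (mul_nonneg h1 h2) h3
        · intro i _
          have hd : (0:ℝ) < (lam + 1 / 2 + i) * (1 + i) := by positivity
          have hgi : ((lam + 1) / 2 + i) * ((lam + 2) / 2 + i) / ((lam + 1 / 2 + i) * (1 + i))
              = 1 + Δ / ((lam + 1 / 2 + i) * (1 + i)) := by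
            have hnum : ((lam + 1) / 2 + (i:ℝ)) * ((lam + 2) / 2 + i)
                = (lam + 1 / 2 + i) * (1 + i) + Δ := by rw [hΔ]; ring
            rw [hnum, add_div, div_self hd.ne']
          rw [hgi]
          have h1 : Δ / ((lam + 1 / 2 + i) * (1 + i)) ≤ |Δ| * (1 / ((lam + 1 / 2 + i) * (1 + i))) := by
            rw [mul_one_div]
            exact (div_le_div_iff_of_pos_right hd).2 (le_abs_self Δ)
          have h2 := Real.add_one_le_exp (|Δ| * (1 / ((lam + 1 / 2 + i) * (1 + i))))
          linarith
    _ = Real.exp (∑ i ∈ Finset.range k, |Δ| * (1 / ((lam + 1 / 2 + i) * (1 + i)))) :=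
        (Real.exp_sum _ _).symm
    _ ≤ Mb lam := by
        rw [Mb, Real.exp_le_exp, ← Finset.mul_sum]
        exact mul_le_mul_of_nonneg_left
          (by simpa using sum_aux (lam + 1 / 2) 1 hC one_pos k) (abs_nonneg _)

lemma mb_le_aCoef {lam : ℝ} (hlam : -(1 / 2 : ℝ) < lam) (k : ℕ) : mb lam ≤ aCoef lam k := by
  have hC : (0:ℝ) < lam + 1 / 2 := by linarith
  have hA : (0:ℝ) < (lam + 1) / 2 := by linarith
  have hB : (0:ℝ) < (lam + 2) / 2 := by linarith
  set Δ : ℝ := ((lam + 1) / 2) * ((lam + 2) / 2) - (lam + 1 / 2) with hΔ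
  have hkey : (aCoef lam k)⁻¹ ≤
      Real.exp (|Δ| * (1 / (((lam + 1) / 2) * ((lam + 2) / 2)) + 2)) := by
    rw [aCoef_eq_prod, ← Finset.prod_inv_distrib]
    calc ∏ i ∈ Finset.range k,
          (((lam + 1) / 2 + i) * ((lam + 2) / 2 + i) / ((lam + 1 / 2 + i) * (1 + i)))⁻¹
        ≤ ∏ i ∈ Finset.range k,
          Real.exp (|Δ| * (1 / (((lam + 1) / 2 + i) * (((lam + 2) / 2) + i)))) := by
          apply Finset.prod_le_prod
          · intro i _
            have h1 : (0:ℝ) < (lam + 1) / 2 + i := by positivity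
            have h2 : (0:ℝ) < (lam + 2) / 2 + i := by positivity
            have h3 : (0:ℝ) < (lam + 1 / 2 + i) * (1 + i) := by positivity
            positivity
          · intro i _
            have h1 : (0:ℝ) < (lam + 1) / 2 + i := by positivity
            have h2 : (0:ℝ) < (lam + 2) / 2 + i := by positivity
            have hd : (0:ℝ) < ((lam + 1) / 2 + i) * ((lam + 2) / 2 + i) := mul_pos h1 h2
            have h3 : (0:ℝ) < (lam + 1 / 2 + i) * (1 + i) := by positivity
            have hgi : (((lam + 1) / 2 + i) * ((lam + 2) / 2 + i) / ((lam + 1 / 2 + i) * (1 + i)))⁻¹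
                = 1 + (-Δ) / (((lam + 1) / 2 + i) * (((lam + 2) / 2) + i)) := by
              rw [inv_div]
              have hnum : (lam + 1 / 2 + (i:ℝ)) * (1 + i)
                  = ((lam + 1) / 2 + i) * (((lam + 2) / 2) + i) + (-Δ) := by rw [hΔ]; ring
              rw [hnum, add_div, div_self hd.ne']
            rw [hgi]
            have h4 : (-Δ) / (((lam + 1) / 2 + i) * (((lam + 2) / 2) + i)) ≤
                |Δ| * (1 / (((lam + 1) / 2 + i) * (((lam + 2) / 2) + i))) := by
              rw [mul_one_div]
              exact (div_le_div_iff_of_pos_right hd).2 (by simpa using le_abs_self (-Δ))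
            have h5 := Real.add_one_le_exp
              (|Δ| * (1 / (((lam + 1) / 2 + i) * (((lam + 2) / 2) + i))))
            linarith
      _ = Real.exp (∑ i ∈ Finset.range k,
            |Δ| * (1 / (((lam + 1) / 2 + i) * (((lam + 2) / 2) + i)))) :=
          (Real.exp_sum _ _).symm
      _ ≤ _ := by
          rw [Real.exp_le_exp, ← Finset.mul_sum]
          exact mul_le_mul_of_nonneg_left (sum_aux _ _ hA hB k) (abs_nonneg _)
  have hpos := aCoef_pos hlam k
  rw [mb]
  have h6 : (0:ℝ) < (aCoef lam k)⁻¹ := by positivity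
  calc (Real.exp (|Δ| * (1 / (((lam + 1) / 2) * ((lam + 2) / 2)) + 2)))⁻¹
      ≤ ((aCoef lam k)⁻¹)⁻¹ := by
        apply inv_anti₀ h6 hkey
    _ = aCoef lam k := inv_inv _

lemma mb_pos (lam : ℝ) : 0 < mb lam := by unfold mb; positivity

lemma ratio_bdd {lam mu : ℝ} (hlam : -(1 / 2 : ℝ) < lam) (hmu : -(1 / 2 : ℝ) < mu) :
    BddAbove (Set.range fun k : ℕ => aCoef mu k / aCoef lam k) := by
  refine ⟨Mb mu / mb lam, ?_⟩
  rintro _ ⟨k, rfl⟩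
  have h0 : (0:ℝ) ≤ Mb mu := le_trans (le_trans (mb_pos mu).le (mb_le_aCoef hmu 0))
    (aCoef_le_Mb hmu 0)
  exact div_le_div₀ h0 (aCoef_le_Mb hmu k) (mb_pos lam) (mb_le_aCoef hlam k)

lemma ratio_sup_pos {lam mu : ℝ} (hlam : -(1 / 2 : ℝ) < lam) (hmu : -(1 / 2 : ℝ) < mu) :
    0 < ⨆ k : ℕ, aCoef mu k / aCoef lam k := by
  have h0 : aCoef mu 0 / aCoef lam 0 = 1 := by rw [aCoef_zero, aCoef_zero]; norm_num
  have := le_ciSup (ratio_bdd hlam hmu) 0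
  rw [h0] at this
  linarith

lemma ratio_le_sup {lam mu : ℝ} (hlam : -(1 / 2 : ℝ) < lam) (hmu : -(1 / 2 : ℝ) < mu) (k : ℕ) :
    aCoef mu k ≤ (⨆ k : ℕ, aCoef mu k / aCoef lam k) * aCoef lam k := by
  have h := le_ciSup (ratio_bdd hlam hmu) k
  rw [div_le_iff₀ (aCoef_pos hlam k)] at h
  exact h

/-! ### Ellipse geometry -/

lemma ellipse_key {θ : ℝ} (hθ : 1 < θ) {z : ℂ} (hz : z ∈ ellipseE θ) :
    2 * θ * (‖1 - z ^ 2‖ + ‖z‖ ^ 2) < θ ^ 2 + 1 := by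
  have hθ0 : (0:ℝ) < θ := lt_trans one_pos hθ
  have hs0 : 0 < Real.sqrt θ := Real.sqrt_pos.2 hθ0
  have hs : Real.sqrt θ ^ 2 = θ := Real.sq_sqrt hθ0.le
  have hpq : ‖z - 1‖ + ‖z + 1‖ < Real.sqrt θ + (Real.sqrt θ)⁻¹ := hz
  have h1 : ‖1 - z ^ 2‖ = ‖z - 1‖ * ‖z + 1‖ := by
    rw [show (1 - z ^ 2 : ℂ) = -((z - 1) * (z + 1)) by ring, norm_neg, norm_mul]
  have h2 : ‖z - 1‖ ^ 2 + ‖z + 1‖ ^ 2 = 2 * ‖z‖ ^ 2 + 2 := by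
    rw [Complex.sq_norm, Complex.sq_norm, Complex.sq_norm]
    simp [Complex.normSq_apply, Complex.sub_re, Complex.sub_im, Complex.add_re, Complex.add_im]
    ring
  set p := ‖z - 1‖ with hp'
  set q := ‖z + 1‖ with hq'
  have hp : 0 ≤ p := norm_nonneg _
  have hq : 0 ≤ q := norm_nonneg _
  have ht2 : (p + q) ^ 2 < (Real.sqrt θ + (Real.sqrt θ)⁻¹) ^ 2 :=
    pow_lt_pow_left₀ hpq (add_nonneg hp hq) two_ne_zero
  have hss : (Real.sqrt θ + (Real.sqrt θ)⁻¹) ^ 2 = θ + 2 + θ⁻¹ := by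
    have h3 : ((Real.sqrt θ)⁻¹) ^ 2 = θ⁻¹ := by rw [inv_pow, hs]
    have h4 : Real.sqrt θ * (Real.sqrt θ)⁻¹ = 1 := mul_inv_cancel₀ hs0.ne'
    nlinarith [hs]
  have hinv : θ * θ⁻¹ = 1 := mul_inv_cancel₀ hθ0.ne'
  rw [h1]
  nlinarith [ht2, hss, hinv, h2, hθ0]

lemma ellipse_abs_sq {θ : ℝ} (hθ : 1 < θ) {z : ℂ} (hz : z ∈ ellipseE θ) :
    2 * θ * ‖z‖ ^ 2 < θ ^ 2 + 1 := by
  have h := ellipse_key hθ hz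
  have h0 : 0 ≤ ‖1 - z ^ 2‖ := norm_nonneg _
  nlinarith [lt_trans one_pos hθ]

/-! ### The rank-one expansion -/

lemma hasSum_term {θ lam : ℝ} (hθ : 1 < θ) {z u : ℂ} (hz : z ∈ ellipseE θ)
    (hu : u ∈ ellipseE θ) (k : ℕ) :
    HasSum (fun m : ℕ => ((aCoef lam k * betaC θ k m : ℝ) : ℂ) * phiF k m z *
      (starRingEnd ℂ) (phiF k m u)) (hatKTerm θ lam z u k) := by
  have hθ0 : (0:ℝ) < θ := lt_trans one_pos hθ
  have hQ : (0:ℝ) < θ ^ 2 + 1 := by positivity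
  have hz2 := ellipse_abs_sq hθ hz
  have hu2 := ellipse_abs_sq hθ hu
  set x : ℂ := ((2 * θ / (θ ^ 2 + 1) : ℝ) : ℂ) * (z * (starRingEnd ℂ) u) with hx'
  have hxnorm : ‖x‖ < 1 := by
    have he : ‖x‖ = (2 * θ / (θ ^ 2 + 1)) * (‖z‖ * ‖u‖) := by
      rw [hx', norm_mul, norm_mul, Complex.norm_real, Real.norm_eq_abs,
        abs_of_pos (by positivity), Complex.norm_conj]
    rw [he, div_mul_eq_mul_div, div_lt_one hQ]
    nlinarith [sq_nonneg (‖z‖ - ‖u‖)]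
  have H := hasSum_choose_mul_geometric_of_norm_lt_one (2 * k) hxnorm
  have hxne : (1 : ℂ) - x ≠ 0 := by
    intro h
    rw [sub_eq_zero] at h
    rw [← h] at hxnorm
    simp at hxnorm
  have hQC : ((θ : ℂ) ^ 2 + 1) ≠ 0 := by
    have he : ((θ : ℂ) ^ 2 + 1) = ((θ ^ 2 + 1 : ℝ) : ℂ) := by push_cast; ring
    rw [he]
    exact_mod_cast hQ.ne'
  have hQC : ((θ : ℂ) ^ 2 + 1) ≠ 0 := by
    have he : ((θ : ℂ) ^ 2 + 1) = ((θ ^ 2 + 1 : ℝ) : ℂ) := by push_cast; ring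
    rw [he]
    exact_mod_cast hQ.ne'
  have hxc : x = 2 * (θ:ℂ) / ((θ:ℂ) ^ 2 + 1) * (z * (starRingEnd ℂ) u) := by
    rw [hx']
    push_cast
    ring
  have hD : ((θ : ℂ) ^ 2 - 2 * θ * z * (starRingEnd ℂ) u + 1) = ((θ:ℂ) ^ 2 + 1) * (1 - x) := by
    rw [hxc]
    field_simp
    ring
  set C0 : ℂ := ((aCoef lam k : ℝ) : ℂ) *
      (4 * (θ:ℂ) ^ 2 * (1 - z ^ 2) * (1 - ((starRingEnd ℂ) u) ^ 2)) ^ k /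
      ((θ:ℂ) ^ 2 + 1) ^ (2 * k + 1) with hC0
  have H2 := H.mul_left C0
  have hfun : (fun m : ℕ => C0 * (((m + 2 * k).choose (2 * k) : ℂ) * x ^ m)) =
      (fun m : ℕ => ((aCoef lam k * betaC θ k m : ℝ) : ℂ) * phiF k m z *
        (starRingEnd ℂ) (phiF k m u)) := by
    funext m
    simp only [hC0]
    rw [hxc]
    simp only [phiF, betaC, map_mul, map_pow, map_sub, map_one]
    push_cast
    rw [show (4 * (θ:ℂ) ^ 2 * (1 - z ^ 2) * (1 - (starRingEnd ℂ) u ^ 2)) ^ k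
        = (4 * (θ:ℂ) ^ 2) ^ k * (1 - z ^ 2) ^ k * (1 - (starRingEnd ℂ) u ^ 2) ^ k by
          rw [mul_pow, mul_pow],
      show (2 * (θ:ℂ) / ((θ:ℂ) ^ 2 + 1) * (z * (starRingEnd ℂ) u)) ^ m
        = (2 * (θ:ℂ)) ^ m * z ^ m * (starRingEnd ℂ) u ^ m / ((θ:ℂ) ^ 2 + 1) ^ m from by
          rw [div_mul_eq_mul_div, div_pow]; ring,
      show 2 * k + m + 1 = (2 * k + 1) + m from by ring, pow_add]
    field_simp
    ring
  have hval : C0 * (1 / (1 - x) ^ (2 * k + 1)) = hatKTerm θ lam z u k := by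
    rw [hatKTerm, hD, mul_pow ((θ:ℂ)^2+1) (1-x), hC0, div_mul_div_comm, mul_one]
  rw [hfun, hval] at H2
  exact H2

lemma norm_term_eq {θ lam : ℝ} (hθ : 1 < θ) (hlam : -(1 / 2 : ℝ) < lam) (k m : ℕ) (z u : ℂ) :
    ‖((aCoef lam k * betaC θ k m : ℝ) : ℂ) * phiF k m z * (starRingEnd ℂ) (phiF k m u)‖ =
      aCoef lam k * betaC θ k m * (‖phiF k m z‖ * ‖phiF k m u‖) := by
  have h1 : (0:ℝ) ≤ aCoef lam k * betaC θ k m := by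
    have h2 : (0:ℝ) ≤ betaC θ k m := by
      unfold betaC
      have : (0:ℝ) < θ := lt_trans one_pos hθ
      positivity
    exact mul_nonneg (aCoef_pos hlam k).le h2
  rw [norm_mul, norm_mul, Complex.norm_real, Real.norm_eq_abs, _root_.abs_of_nonneg h1,
    Complex.norm_conj, mul_assoc]

lemma hasSum_diag {θ : ℝ} (hθ : 1 < θ) {z : ℂ} (hz : z ∈ ellipseE θ) (lamv : ℝ) (k : ℕ) :
    HasSum (fun m : ℕ => aCoef lamv k * betaC θ k m * ‖phiF k m z‖ ^ 2)
      (aCoef lamv k * (2 * θ * ‖1 - z ^ 2‖) ^ (2 * k) /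
        (θ ^ 2 + 1 - 2 * θ * ‖z‖ ^ 2) ^ (2 * k + 1)) := by
  have hθ0 : (0:ℝ) < θ := lt_trans one_pos hθ
  have hQ : (0:ℝ) < θ ^ 2 + 1 := by positivity
  have hz2 := ellipse_abs_sq hθ hz
  have hQ2 : (0:ℝ) < θ ^ 2 + 1 - 2 * θ * ‖z‖ ^ 2 := by linarith
  set t : ℝ := 2 * θ * ‖z‖ ^ 2 / (θ ^ 2 + 1) with ht'
  have htnn : 0 ≤ t := by positivity
  have htnorm : ‖t‖ < 1 := by
    rw [Real.norm_eq_abs, _root_.abs_of_nonneg htnn, ht', div_lt_one hQ]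
    exact hz2
  have H := hasSum_choose_mul_geometric_of_norm_lt_one (2 * k) htnorm
  have H2 := H.mul_left (aCoef lamv k * (2 * θ * ‖1 - z ^ 2‖) ^ (2 * k) /
      (θ ^ 2 + 1) ^ (2 * k + 1))
  have hfun : (fun m : ℕ => aCoef lamv k * (2 * θ * ‖1 - z ^ 2‖) ^ (2 * k) /
      (θ ^ 2 + 1) ^ (2 * k + 1) * (((m + 2 * k).choose (2 * k) : ℝ) * t ^ m)) =
      (fun m : ℕ => aCoef lamv k * betaC θ k m * ‖phiF k m z‖ ^ 2) := by
    funext m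
    simp only [betaC, phiF, norm_mul, norm_pow, ht']
    rw [show (2 * θ * ‖z‖ ^ 2 / (θ ^ 2 + 1)) ^ m
        = (2 * θ) ^ m * (‖z‖ ^ 2) ^ m / (θ ^ 2 + 1) ^ m by
          rw [div_pow, mul_pow],
      show 2 * k + m + 1 = (2 * k + 1) + m from by ring, pow_add,
      mul_pow (2 * θ) (‖1 - z ^ 2‖) (2 * k),
      show (4 * θ ^ 2 : ℝ) ^ k = (2 * θ) ^ (2 * k) from by
        rw [show (4 * θ ^ 2 : ℝ) = (2 * θ) ^ 2 by ring, ← pow_mul, mul_comm 2 k, pow_mul,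
          ← pow_mul, mul_comm k 2]]
    field_simp
    ring
  have hval : aCoef lamv k * (2 * θ * ‖1 - z ^ 2‖) ^ (2 * k) /
      (θ ^ 2 + 1) ^ (2 * k + 1) * (1 / (1 - t) ^ (2 * k + 1)) =
      aCoef lamv k * (2 * θ * ‖1 - z ^ 2‖) ^ (2 * k) /
        (θ ^ 2 + 1 - 2 * θ * ‖z‖ ^ 2) ^ (2 * k + 1) := by
    have h1mt : 1 - t = (θ ^ 2 + 1 - 2 * θ * ‖z‖ ^ 2) / (θ ^ 2 + 1) := by
      rw [ht']
      field_simp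
    rw [h1mt, div_pow]
    field_simp
  rw [hfun, hval] at H2
  exact H2

set_option maxHeartbeats 800000 in
lemma summable_diag {θ lam : ℝ} (hθ : 1 < θ) (hlam : -(1 / 2 : ℝ) < lam) {z : ℂ}
    (hz : z ∈ ellipseE θ) :
    Summable (fun km : ℕ × ℕ =>
      aCoef lam km.1 * betaC θ km.1 km.2 * ‖phiF km.1 km.2 z‖ ^ 2) := by
  have hθ0 : (0:ℝ) < θ := lt_trans one_pos hθ
  have hnn : 0 ≤ (fun km : ℕ × ℕ =>
      aCoef lam km.1 * betaC θ km.1 km.2 * ‖phiF km.1 km.2 z‖ ^ 2) := fun km =>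
    mul_nonneg (mul_nonneg (aCoef_pos hlam _).le (betaC_nonneg hθ0 _ _)) (sq_nonneg _)
  refine (summable_prod_of_nonneg hnn).2 ⟨fun k => (hasSum_diag hθ hz lam k).summable, ?_⟩
  set P : ℝ := 2 * θ * ‖1 - z ^ 2‖ with hP
  set Q : ℝ := θ ^ 2 + 1 - 2 * θ * ‖z‖ ^ 2 with hQ
  have hQpos : 0 < Q := by
    have := ellipse_abs_sq hθ hz
    rw [hQ]; linarith
  have hPnn : 0 ≤ P := by rw [hP]; positivity
  have hPQ : P < Q := by
    have := ellipse_key hθ hz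
    rw [hP, hQ]; linarith
  have hr1 : (P / Q) ^ 2 < 1 := by
    apply pow_lt_one₀ (by positivity) ((div_lt_one hQpos).2 hPQ) two_ne_zero
  have hr0 : 0 ≤ (P / Q) ^ 2 := by positivity
  refine Summable.of_nonneg_of_le (f := fun k => (Mb lam / Q) * ((P / Q) ^ 2) ^ k)
    (fun k => ?_) (fun k => ?_) ((summable_geometric_of_lt_one hr0 hr1).mul_left _)
  · rw [(hasSum_diag hθ hz lam k).tsum_eq]
    have hQk : (0:ℝ) < Q ^ (2 * k + 1) := by positivity
    exact div_nonneg (mul_nonneg (aCoef_pos hlam _).le (by positivity)) hQk.le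
  rw [(hasSum_diag hθ hz lam k).tsum_eq]
  have hkey : P ^ (2 * k) / Q ^ (2 * k + 1) = ((P / Q) ^ 2) ^ k * (1 / Q) := by
    rw [show ((P / Q) ^ 2) ^ k = P ^ (2 * k) / Q ^ (2 * k) from by
      rw [← pow_mul, div_pow], pow_succ, div_mul_div_comm, mul_one]
  have h2 : aCoef lam k * P ^ (2 * k) / Q ^ (2 * k + 1)
      = aCoef lam k * (((P / Q) ^ 2) ^ k * (1 / Q)) := by
    rw [mul_div_assoc, hkey]
  rw [h2]
  have h3 : (((P / Q) ^ 2) ^ k * (1 / Q)) ≥ 0 := by positivity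
  calc aCoef lam k * (((P / Q) ^ 2) ^ k * (1 / Q))
      ≤ Mb lam * (((P / Q) ^ 2) ^ k * (1 / Q)) :=
        mul_le_mul_of_nonneg_right (aCoef_le_Mb hlam k) h3
    _ = Mb lam / Q * ((P / Q) ^ 2) ^ k := by ring

lemma summable_mixed {θ lam : ℝ} (hθ : 1 < θ) (hlam : -(1 / 2 : ℝ) < lam) {z u : ℂ}
    (hz : z ∈ ellipseE θ) (hu : u ∈ ellipseE θ) :
    Summable (fun km : ℕ × ℕ => aCoef lam km.1 * betaC θ km.1 km.2 *
      (‖phiF km.1 km.2 z‖ * ‖phiF km.1 km.2 u‖)) := by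
  have hθ0 : (0:ℝ) < θ := lt_trans one_pos hθ
  have hg := ((summable_diag hθ hlam hz).add (summable_diag hθ hlam hu)).div_const 2
  apply Summable.of_nonneg_of_le ?_ ?_ hg
  · intro km
    have h1 := (aCoef_pos hlam km.1).le
    have h2 := betaC_nonneg hθ0 km.1 km.2
    positivity
  · intro km
    have h1 : (0:ℝ) ≤ aCoef lam km.1 * betaC θ km.1 km.2 :=
      mul_nonneg (aCoef_pos hlam km.1).le (betaC_nonneg hθ0 km.1 km.2)
    have h2 : ‖phiF km.1 km.2 z‖ * ‖phiF km.1 km.2 u‖ ≤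
        (‖phiF km.1 km.2 z‖ ^ 2 + ‖phiF km.1 km.2 u‖ ^ 2) / 2 := by
      nlinarith [sq_nonneg (‖phiF km.1 km.2 z‖ - ‖phiF km.1 km.2 u‖)]
    calc aCoef lam km.1 * betaC θ km.1 km.2 *
          (‖phiF km.1 km.2 z‖ * ‖phiF km.1 km.2 u‖)
        ≤ aCoef lam km.1 * betaC θ km.1 km.2 *
          ((‖phiF km.1 km.2 z‖ ^ 2 + ‖phiF km.1 km.2 u‖ ^ 2) / 2) :=
          mul_le_mul_of_nonneg_left h2 h1
      _ = (aCoef lam km.1 * betaC θ km.1 km.2 * ‖phiF km.1 km.2 z‖ ^ 2 +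
          aCoef lam km.1 * betaC θ km.1 km.2 * ‖phiF km.1 km.2 u‖ ^ 2) / 2 := by
          ring

lemma summable_norm_term {θ lam : ℝ} (hθ : 1 < θ) (hlam : -(1 / 2 : ℝ) < lam) {z u : ℂ}
    (hz : z ∈ ellipseE θ) (hu : u ∈ ellipseE θ) :
    Summable (fun km : ℕ × ℕ => ‖((aCoef lam km.1 * betaC θ km.1 km.2 : ℝ) : ℂ) *
      phiF km.1 km.2 z * (starRingEnd ℂ) (phiF km.1 km.2 u)‖) := by
  have := summable_mixed hθ hlam hz hu
  refine this.congr fun km => ?_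
  exact (norm_term_eq hθ hlam km.1 km.2 z u).symm

lemma summable_hatKTerm_norm {θ lam : ℝ} (hθ : 1 < θ) (hlam : -(1 / 2 : ℝ) < lam) {z u : ℂ}
    (hz : z ∈ ellipseE θ) (hu : u ∈ ellipseE θ) :
    Summable fun k : ℕ => ‖hatKTerm θ lam z u k‖ := by
  have hsn := summable_norm_term hθ hlam hz hu
  obtain ⟨h1, h2⟩ := (summable_prod_of_nonneg (fun km => norm_nonneg _)).1 hsn
  apply Summable.of_nonneg_of_le (fun k => norm_nonneg _) ?_ h2
  intro k
  rw [← (hasSum_term hθ hz hu k).tsum_eq]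
  exact norm_tsum_le_tsum_norm (h1 k)

/-! ### Quadratic forms -/

lemma quad_eq {θ lam : ℝ} (hθ : 1 < θ) (hlam : -(1 / 2 : ℝ) < lam) (n : ℕ)
    (z : Fin n → ℂ) (c : Fin n → ℂ) (hz : ∀ i, z i ∈ ellipseE θ) :
    (∑ i : Fin n, ∑ j : Fin n, hatK θ lam (z i) (z j) * c i * (starRingEnd ℂ) (c j)) =
      ((((θ ^ 2 - 1) / π) * ∑' km : ℕ × ℕ, aCoef lam km.1 * betaC θ km.1 km.2 *
        ‖∑ i : Fin n, c i * phiF km.1 km.2 (z i)‖ ^ 2 : ℝ) : ℂ) := by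
  set T : Fin n → Fin n → ℕ × ℕ → ℂ := fun i j km =>
    ((aCoef lam km.1 * betaC θ km.1 km.2 : ℝ) : ℂ) * phiF km.1 km.2 (z i) *
      (starRingEnd ℂ) (phiF km.1 km.2 (z j)) with hT
  have hTsum : ∀ i j, Summable (T i j) := fun i j =>
    Summable.of_norm (summable_norm_term hθ hlam (hz i) (hz j))
  have hterm : ∀ i j, hatK θ lam (z i) (z j) =
      (((θ ^ 2 - 1) / π : ℝ) : ℂ) * ∑' km : ℕ × ℕ, T i j km := by
    intro i j
    rw [hatK]
    congr 1
    rw [Summable.tsum_prod' (hTsum i j) (fun k => (hasSum_term hθ (hz i) (hz j) k).summable)]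
    exact (tsum_congr fun k => (hasSum_term hθ (hz i) (hz j) k).tsum_eq).symm
  have hkm : ∀ km : ℕ × ℕ, (∑ p : Fin n × Fin n, T p.1 p.2 km * (c p.1 * (starRingEnd ℂ) (c p.2)))
      = ((aCoef lam km.1 * betaC θ km.1 km.2 *
          ‖∑ i : Fin n, c i * phiF km.1 km.2 (z i)‖ ^ 2 : ℝ) : ℂ) := by
    intro km
    rw [Fintype.sum_prod_type]
    have step1 : ∑ i : Fin n, ∑ j : Fin n, T i j km * (c i * (starRingEnd ℂ) (c j))
        = ((aCoef lam km.1 * betaC θ km.1 km.2 : ℝ) : ℂ) *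
          ((∑ i : Fin n, c i * phiF km.1 km.2 (z i)) *
            (starRingEnd ℂ) (∑ j : Fin n, c j * phiF km.1 km.2 (z j))) := by
      rw [map_sum, Finset.sum_mul_sum, Finset.mul_sum]
      refine Finset.sum_congr rfl fun i _ => ?_
      rw [Finset.mul_sum]
      refine Finset.sum_congr rfl fun j _ => ?_
      rw [hT]
      simp only [map_mul]
      ring
    rw [step1, Complex.mul_conj, Complex.normSq_eq_norm_sq]
    push_cast
    ring
  calc ∑ i : Fin n, ∑ j : Fin n, hatK θ lam (z i) (z j) * c i * (starRingEnd ℂ) (c j)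
      = ∑ p : Fin n × Fin n, (((θ ^ 2 - 1) / π : ℝ) : ℂ) *
          ∑' km : ℕ × ℕ, T p.1 p.2 km * (c p.1 * (starRingEnd ℂ) (c p.2)) := by
        rw [Fintype.sum_prod_type]
        refine Finset.sum_congr rfl fun i _ => Finset.sum_congr rfl fun j _ => ?_
        rw [hterm i j, tsum_mul_right]
        ring
    _ = (((θ ^ 2 - 1) / π : ℝ) : ℂ) *
          ∑' km : ℕ × ℕ, ∑ p : Fin n × Fin n, T p.1 p.2 km * (c p.1 * (starRingEnd ℂ) (c p.2)) := by
        rw [← Finset.mul_sum]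
        congr 1
        exact (Summable.tsum_finsetSum fun p _ => ((hTsum p.1 p.2).mul_right _)).symm
    _ = (((θ ^ 2 - 1) / π : ℝ) : ℂ) * ∑' km : ℕ × ℕ,
          ((aCoef lam km.1 * betaC θ km.1 km.2 *
            ‖∑ i : Fin n, c i * phiF km.1 km.2 (z i)‖ ^ 2 : ℝ) : ℂ) := by
        congr 1
        exact tsum_congr hkm
    _ = ((((θ ^ 2 - 1) / π) * ∑' km : ℕ × ℕ, aCoef lam km.1 * betaC θ km.1 km.2 *
          ‖∑ i : Fin n, c i * phiF km.1 km.2 (z i)‖ ^ 2 : ℝ) : ℂ) := by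
        rw [← Complex.ofReal_tsum, ← Complex.ofReal_mul]

lemma summable_quad {θ lam : ℝ} (hθ : 1 < θ) (hlam : -(1 / 2 : ℝ) < lam) (n : ℕ)
    (z : Fin n → ℂ) (c : Fin n → ℂ) (hz : ∀ i, z i ∈ ellipseE θ) :
    Summable (fun km : ℕ × ℕ => aCoef lam km.1 * betaC θ km.1 km.2 *
      ‖∑ i : Fin n, c i * phiF km.1 km.2 (z i)‖ ^ 2) := by
  have hθ0 : (0:ℝ) < θ := lt_trans one_pos hθ
  have hg : Summable (fun km : ℕ × ℕ => ∑ i : Fin n, (n * ‖c i‖ ^ 2) *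
      (aCoef lam km.1 * betaC θ km.1 km.2 * ‖phiF km.1 km.2 (z i)‖ ^ 2)) :=
    summable_sum fun i _ => (summable_diag hθ hlam (hz i)).mul_left _
  apply Summable.of_nonneg_of_le ?_ ?_ hg
  · intro km
    have h1 := (aCoef_pos hlam km.1).le
    have h2 := betaC_nonneg hθ0 km.1 km.2
    positivity
  · intro km
    have hab : (0:ℝ) ≤ aCoef lam km.1 * betaC θ km.1 km.2 :=
      mul_nonneg (aCoef_pos hlam km.1).le (betaC_nonneg hθ0 km.1 km.2)
    have h1 : ‖∑ i : Fin n, c i * phiF km.1 km.2 (z i)‖ ≤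
        ∑ i : Fin n, ‖c i‖ * ‖phiF km.1 km.2 (z i)‖ := by
      refine le_trans (norm_sum_le _ _) ?_
      refine Finset.sum_le_sum fun i _ => ?_
      rw [norm_mul]
    have h2 : ‖∑ i : Fin n, c i * phiF km.1 km.2 (z i)‖ ^ 2 ≤
        (∑ i : Fin n, ‖c i‖ * ‖phiF km.1 km.2 (z i)‖) ^ 2 :=
      pow_le_pow_left₀ (norm_nonneg _) h1 2
    have h3 : (∑ i : Fin n, ‖c i‖ * ‖phiF km.1 km.2 (z i)‖) ^ 2 ≤
        n * ∑ i : Fin n, (‖c i‖ * ‖phiF km.1 km.2 (z i)‖) ^ 2 := by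
      have := sq_sum_le_card_mul_sum_sq
        (s := (Finset.univ : Finset (Fin n)))
        (f := fun i => ‖c i‖ * ‖phiF km.1 km.2 (z i)‖)
      simpa using this
    calc aCoef lam km.1 * betaC θ km.1 km.2 *
          ‖∑ i : Fin n, c i * phiF km.1 km.2 (z i)‖ ^ 2
        ≤ aCoef lam km.1 * betaC θ km.1 km.2 *
          (n * ∑ i : Fin n, (‖c i‖ * ‖phiF km.1 km.2 (z i)‖) ^ 2) :=
          mul_le_mul_of_nonneg_left (le_trans h2 h3) hab
      _ = ∑ i : Fin n, (n * ‖c i‖ ^ 2) *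
          (aCoef lam km.1 * betaC θ km.1 km.2 * ‖phiF km.1 km.2 (z i)‖ ^ 2) := by
          rw [Finset.mul_sum, Finset.mul_sum]
          refine Finset.sum_congr rfl fun i _ => ?_
          ring

end HatKAux

open HatKAux in
theorem hatK_kernels_equivalent (θ lam mu : ℝ) (hθ : 1 < θ)
    (hlam : -(1 / 2 : ℝ) < lam) (hmu : -(1 / 2 : ℝ) < mu) :
    (∀ z ∈ ellipseE θ, ∀ u ∈ ellipseE θ,
        Summable fun k : ℕ => ‖hatKTerm θ lam z u k‖) ∧
    BddAbove (Set.range fun k : ℕ => aCoef mu k / aCoef lam k) ∧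
    (0 < ⨆ k : ℕ, aCoef mu k / aCoef lam k) ∧
    ∀ (n : ℕ) (z : Fin n → ℂ) (c : Fin n → ℂ), (∀ i, z i ∈ ellipseE θ) →
      0 ≤ (∑ i : Fin n, ∑ j : Fin n, hatK θ mu (z i) (z j) * c i * (starRingEnd ℂ) (c j)).re ∧
      (∑ i : Fin n, ∑ j : Fin n, hatK θ mu (z i) (z j) * c i * (starRingEnd ℂ) (c j)).im = 0 ∧
      (∑ i : Fin n, ∑ j : Fin n, hatK θ mu (z i) (z j) * c i * (starRingEnd ℂ) (c j)).re ≤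
        (⨆ k : ℕ, aCoef mu k / aCoef lam k) *
          (∑ i : Fin n, ∑ j : Fin n, hatK θ lam (z i) (z j) * c i * (starRingEnd ℂ) (c j)).re := by
  refine ⟨fun z hz u hu => summable_hatKTerm_norm hθ hlam hz hu, ratio_bdd hlam hmu,
    ratio_sup_pos hlam hmu, fun n z c hz => ?_⟩
  have hCpos : (0 : ℝ) < (θ ^ 2 - 1) / π := by
    apply div_pos (by nlinarith) Real.pi_pos
  set S : ℕ × ℕ → ℝ := fun km => ‖∑ i : Fin n, c i * phiF km.1 km.2 (z i)‖ ^ 2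
    with hS
  have hq_mu := quad_eq hθ hmu n z c hz
  have hq_lam := quad_eq hθ hlam n z c hz
  have hsum_mu := summable_quad hθ hmu n z c hz
  have hsum_lam := summable_quad hθ hlam n z c hz
  have htnn : ∀ lamv, (hlamv : -(1/2:ℝ) < lamv) → 0 ≤ ∑' km : ℕ × ℕ,
      aCoef lamv km.1 * betaC θ km.1 km.2 * S km := fun lamv hlamv =>
    tsum_nonneg fun km => by
      have := aCoef_pos hlamv km.1
      have := betaC_nonneg (lt_trans one_pos hθ) km.1 km.2
      positivity
  refine ⟨?_, ?_, ?_⟩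
  · rw [hq_mu]
    simp only [Complex.ofReal_re]
    exact mul_nonneg hCpos.le (htnn mu hmu)
  · rw [hq_mu, Complex.ofReal_im]
  · rw [hq_mu, hq_lam]
    simp only [Complex.ofReal_re]
    have hle : (∑' km : ℕ × ℕ, aCoef mu km.1 * betaC θ km.1 km.2 * S km) ≤
        (⨆ k : ℕ, aCoef mu k / aCoef lam k) *
          ∑' km : ℕ × ℕ, aCoef lam km.1 * betaC θ km.1 km.2 * S km := by
      rw [← tsum_mul_left]
      refine Summable.tsum_le_tsum (fun km => ?_) hsum_mu (hsum_lam.mul_left _)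
      have h1 := ratio_le_sup hlam hmu km.1
      have h2 : 0 ≤ betaC θ km.1 km.2 * S km :=
        mul_nonneg (betaC_nonneg (lt_trans one_pos hθ) km.1 km.2) (sq_nonneg _)
      calc aCoef mu km.1 * betaC θ km.1 km.2 * S km
          = aCoef mu km.1 * (betaC θ km.1 km.2 * S km) := by ring
        _ ≤ ((⨆ k : ℕ, aCoef mu k / aCoef lam k) * aCoef lam km.1) *
            (betaC θ km.1 km.2 * S km) := mul_le_mul_of_nonneg_right h1 h2
        _ = (⨆ k : ℕ, aCoef mu k / aCoef lam k) *
            (aCoef lam km.1 * betaC θ km.1 km.2 * S km) := by ring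
    calc ((θ ^ 2 - 1) / π) * ∑' km : ℕ × ℕ, aCoef mu km.1 * betaC θ km.1 km.2 * S km
        ≤ ((θ ^ 2 - 1) / π) * ((⨆ k : ℕ, aCoef mu k / aCoef lam k) *
          ∑' km : ℕ × ℕ, aCoef lam km.1 * betaC θ km.1 km.2 * S km) :=
        mul_le_mul_of_nonneg_left hle hCpos.le
      _ = (⨆ k : ℕ, aCoef mu k / aCoef lam k) *
          (((θ ^ 2 - 1) / π) * ∑' km : ℕ × ℕ, aCoef lam km.1 * betaC θ km.1 km.2 * S km) := by
        ring
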